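/- For φ, φ' ∈ PPU(A): φ·H[[t⁻¹]] ⊆ φ'·H[[t⁻¹]] if and only if φ⁻¹φ' ∈ PPU⁺(A). Consequently the map Ω : φ ↦ φ·H[[t⁻¹]] is an order isomorphism from PPU(A), ordered by φ ≤ φ' iff φ⁻¹φ' ∈ PPU⁺(A), onto sub(H)_{−∞}^{∞} ordered by inclusion, and in particular an isomorphism of lattices. -/

import Mathlib

noncomputable section

/-- Finite Laurent polynomials `A[t,t⁻¹]` with coefficients among the bounded operators
on `H`, with convolution product. -/
abbrev LaurentOp (H : Type*) [NormedAddCommGroup H] [InnerProductSpace ℂ H]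
    [CompleteSpace H] : Type _ :=
  AddMonoidAlgebra (H →L[ℂ] H) ℤ

variable {H : Type*} [NormedAddCommGroup H] [InnerProductSpace ℂ H] [CompleteSpace H]

/-- The involution `φ* = Σ tⁱ (φ₋ᵢ)*` on `B(H)[t,t⁻¹]` (with `*` the adjoint). -/
def lstar (φ : LaurentOp H) : LaurentOp H :=
  AddMonoidAlgebra.ofCoeff
    (Finsupp.equivMapDomain (Equiv.neg ℤ) (Finsupp.mapRange star (star_zero _) φ.coeff))

/-- The specialization `ε₁(φ) = Σᵢ φᵢ`. -/
def eps1 (φ : LaurentOp H) : H →L[ℂ] H := φ.coeff.sum fun _ a => a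

/-- Membership in `PPU(A)`: all coefficients of `φ` lie in the von Neumann algebra `A`,
`φ` is paraunitary (`φ*φ = φφ* = 1`), and `ε₁(φ) = 1`. -/
def InPPU (A : VonNeumannAlgebra H) (φ : LaurentOp H) : Prop :=
  (∀ i, φ.coeff i ∈ A) ∧ lstar φ * φ = 1 ∧ φ * lstar φ = 1 ∧ eps1 φ = 1

/-- Membership in `PPU⁺(A) = PPU(A) ∩ A[t]`. -/
def InPPUplus (A : VonNeumannAlgebra H) (φ : LaurentOp H) : Prop :=
  InPPU A φ ∧ ∀ i < (0 : ℤ), φ.coeff i = 0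

/-- The action of a Laurent polynomial on a two-sided sequence:
`(φx)ᵢ = Σ_k φ_k (x_{i−k})`. -/
def act (φ : LaurentOp H) (x : ℤ → H) : ℤ → H :=
  fun i => ∑ k ∈ φ.coeff.support, φ.coeff k (x (i - k))

/-- `tⁿH[[t⁻¹]]`: the square-summable sequences (i.e. elements of
`H[[t,t⁻¹]] = ℓ²(ℤ,H)`) vanishing in all degrees `> n`. -/
def Hmn (H : Type*) [NormedAddCommGroup H] [InnerProductSpace ℂ H] [CompleteSpace H]
    (n : ℤ) : Set (ℤ → H) :=
  {x | Memℓp x 2 ∧ ∀ i > n, x i = 0}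

/-- `φ·H[[t⁻¹]]`, the image of `H[[t⁻¹]] = t⁰H[[t⁻¹]]` under the action of `φ`. -/
def actH (φ : LaurentOp H) : Set (ℤ → H) := act φ '' Hmn H 0

/-- `S` is a closed linear subspace of `H[[t,t⁻¹]] = ℓ²(ℤ,H)` which is invariant under
the actions of the commutant `A'` (acting coefficientwise) and of `t⁻¹` (the shift). -/
def IsInvClosed (A : VonNeumannAlgebra H) (S : Set (ℤ → H)) : Prop :=
  (∀ x ∈ S, Memℓp x 2) ∧
  IsClosed {y : lp (fun _ : ℤ => H) 2 | (y : ℤ → H) ∈ S} ∧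
  (0 ∈ S) ∧ (∀ x ∈ S, ∀ y ∈ S, x + y ∈ S) ∧ (∀ (c : ℂ), ∀ x ∈ S, c • x ∈ S) ∧
  (∀ x ∈ S, (fun i => x (i + 1)) ∈ S) ∧
  (∀ ψ ∈ A.commutant, ∀ x ∈ S, (fun i => ψ (x i)) ∈ S)

/-- The orthogonal projection `π_M` onto a closed subspace `M`, as an operator on `H`. -/
def projL (M : Submodule ℂ H) (hM : IsClosed (M : Set H)) : H →L[ℂ] H :=
  haveI : CompleteSpace M := hM.completeSpace_coe
  M.subtypeL.comp (M.orthogonalProjectionOnto)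

/-- The element `p_M = tπ_M + π_{Mᗮ}` of `A[t,t⁻¹]`. -/
def pEl (M : Submodule ℂ H) (hM : IsClosed (M : Set H)) : LaurentOp H :=
  AddMonoidAlgebra.single (1 : ℤ) (projL M hM) +
    AddMonoidAlgebra.single (0 : ℤ) (projL Mᗮ M.isClosed_orthogonal)

/-- The element `t = t·1` of `A[t,t⁻¹]`. -/
def tEl (H : Type*) [NormedAddCommGroup H] [InnerProductSpace ℂ H] [CompleteSpace H] :
    LaurentOp H :=
  AddMonoidAlgebra.single (1 : ℤ) 1

/-- `M` is invariant under every element of the commutant `A'`. -/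
def InvariantC (A : VonNeumannAlgebra H) (M : Submodule ℂ H) : Prop :=
  ∀ φ ∈ A.commutant, ∀ x ∈ M, φ x ∈ M


lemma lstar_apply (φ : LaurentOp H) (i : ℤ) : (lstar φ).coeff i = star (φ.coeff (-i)) := rfl

lemma lstar_add (φ ψ : LaurentOp H) : lstar (φ + ψ) = lstar φ + lstar ψ :=
  AddMonoidAlgebra.coeff_injective (Finsupp.ext fun i => by
    rw [lstar_apply, AddMonoidAlgebra.coeff_add, Finsupp.add_apply, AddMonoidAlgebra.coeff_add,
      Finsupp.add_apply, lstar_apply, lstar_apply, star_add])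

lemma lstar_zero : lstar (0 : LaurentOp H) = 0 :=
  AddMonoidAlgebra.coeff_injective (Finsupp.ext fun i => by rw [lstar_apply]; simp)

lemma lstar_single (a : ℤ) (T : H →L[ℂ] H) :
    lstar (AddMonoidAlgebra.single a T) = AddMonoidAlgebra.single (-a) (star T) :=
  AddMonoidAlgebra.coeff_injective (Finsupp.ext fun i => by
    rw [lstar_apply, AddMonoidAlgebra.coeff_single, AddMonoidAlgebra.coeff_single,
      Finsupp.single_apply, Finsupp.single_apply]
    by_cases h : a = -i
    · rw [if_pos h, if_pos (by omega)]
    · rw [if_neg h, if_neg (by omega), star_zero])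

lemma lstar_lstar (φ : LaurentOp H) : lstar (lstar φ) = φ :=
  AddMonoidAlgebra.coeff_injective (Finsupp.ext fun i => by rw [lstar_apply, lstar_apply, star_star, neg_neg])

lemma lstar_one : lstar (1 : LaurentOp H) = 1 := by
  rw [show (1 : LaurentOp H) = AddMonoidAlgebra.single 0 1 from rfl, lstar_single]
  rw [neg_zero]; norm_num

lemma lstar_mul (φ ψ : LaurentOp H) : lstar (φ * ψ) = lstar ψ * lstar φ := by
  induction φ using AddMonoidAlgebra.induction_linear with
  | zero => rw [zero_mul, lstar_zero, mul_zero]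
  | add f g hf hg => rw [add_mul, lstar_add, lstar_add, mul_add, hf, hg]
  | single a T =>
    induction ψ using AddMonoidAlgebra.induction_linear with
    | zero => rw [mul_zero, lstar_zero, zero_mul]
    | add f g hf hg => rw [mul_add, lstar_add, lstar_add, add_mul, hf, hg]
    | single b S =>
      rw [AddMonoidAlgebra.single_mul_single, lstar_single, lstar_single, lstar_single,
        AddMonoidAlgebra.single_mul_single, star_mul]
      congr 1
      omega


def eps1RingHom : LaurentOp H →+* (H →L[ℂ] H) :=
  AddMonoidAlgebra.liftNCRingHom (RingHom.id _) 1 (fun x y => by simp [Commute, SemiconjBy])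

lemma eps1_single (a : ℤ) (T : H →L[ℂ] H) : eps1 (AddMonoidAlgebra.single a T) = T := by
  unfold eps1
  rw [AddMonoidAlgebra.coeff_single, Finsupp.sum_single_index rfl]

lemma eps1_add (φ ψ : LaurentOp H) : eps1 (φ + ψ) = eps1 φ + eps1 ψ := by
  unfold eps1
  rw [AddMonoidAlgebra.coeff_add, Finsupp.sum_add_index (by simp) (by simp)]

lemma eps1_eq (φ : LaurentOp H) : eps1 φ = eps1RingHom φ := by
  induction φ using AddMonoidAlgebra.induction_linear with
  | zero => rw [map_zero]; unfold eps1; simp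
  | add f g hf hg => rw [map_add, eps1_add, hf, hg]
  | single a T =>
    rw [eps1_single]
    symm
    show AddMonoidAlgebra.liftNC _ _ _ = T
    rw [AddMonoidAlgebra.liftNC_single]
    simp

lemma eps1_mul (φ ψ : LaurentOp H) : eps1 (φ * ψ) = eps1 φ * eps1 ψ := by
  rw [eps1_eq, eps1_eq, eps1_eq, map_mul]

lemma eps1_one : eps1 (1 : LaurentOp H) = 1 := by rw [eps1_eq, map_one]


lemma act_eq_sum (φ : LaurentOp H) (x : ℤ → H) (s : Finset ℤ) (hs : φ.coeff.support ⊆ s) (i : ℤ) :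
    act φ x i = ∑ k ∈ s, φ.coeff k (x (i - k)) :=
  Finset.sum_subset hs (fun k _ hk => by
    rw [Finsupp.notMem_support_iff.1 hk]; simp)

lemma act_add_left (φ ψ : LaurentOp H) (x : ℤ → H) :
    act (φ + ψ) x = act φ x + act ψ x := by
  funext i
  set s := φ.coeff.support ∪ ψ.coeff.support ∪ (φ + ψ).coeff.support with hs
  rw [Pi.add_apply,
    act_eq_sum (φ + ψ) x s (fun k hk => by rw [hs, Finset.mem_union]; exact Or.inr hk) i,
    act_eq_sum φ x s (fun k hk => by rw [hs, Finset.mem_union, Finset.mem_union]; exact Or.inl (Or.inl hk)) i,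
    act_eq_sum ψ x s (fun k hk => by rw [hs, Finset.mem_union, Finset.mem_union]; exact Or.inl (Or.inr hk)) i,
    ← Finset.sum_add_distrib]
  refine Finset.sum_congr rfl fun k _ => ?_
  rw [AddMonoidAlgebra.coeff_add, Finsupp.add_apply, ContinuousLinearMap.add_apply]

lemma act_zero_left (x : ℤ → H) : act (0 : LaurentOp H) x = 0 := by
  funext i; simp [act]

lemma act_single (a : ℤ) (T : H →L[ℂ] H) (x : ℤ → H) :
    act (AddMonoidAlgebra.single a T) x = fun i => T (x (i - a)) := by
  funext i
  rw [act_eq_sum (AddMonoidAlgebra.single a T) x {a} Finsupp.support_single_subset i, Finset.sum_singleton,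
    AddMonoidAlgebra.coeff_single, Finsupp.single_eq_same]

lemma act_one (x : ℤ → H) : act (1 : LaurentOp H) x = x := by
  rw [AddMonoidAlgebra.one_def, act_single]
  funext i; simp

lemma act_mul (φ ψ : LaurentOp H) (x : ℤ → H) : act (φ * ψ) x = act φ (act ψ x) := by
  induction φ using AddMonoidAlgebra.induction_linear with
  | zero => rw [zero_mul, act_zero_left, act_zero_left]
  | add f g hf hg => rw [add_mul, act_add_left, act_add_left, hf, hg]
  | single a T =>
    induction ψ using AddMonoidAlgebra.induction_linear with
    | zero =>
      rw [mul_zero, act_zero_left]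
      symm
      rw [act_single]; funext i; simp
    | add f g hf hg =>
      rw [mul_add, act_add_left, hf, hg, act_add_left]
      funext i
      simp only [Pi.add_apply, act_single, map_add]
    | single b S =>
      rw [AddMonoidAlgebra.single_mul_single, act_single, act_single, act_single]
      funext i
      rw [ContinuousLinearMap.mul_apply]
      have h : i - (a + b) = i - a - b := by omega
      rw [h]


lemma act_add_right (φ : LaurentOp H) (x y : ℤ → H) :
    act φ (x + y) = act φ x + act φ y := by
  funext i
  simp [act, Finset.sum_add_distrib]

lemma act_smul_right (φ : LaurentOp H) (c : ℂ) (x : ℤ → H) :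
    act φ (c • x) = c • act φ x := by
  funext i
  simp [act, Finset.smul_sum]

lemma act_zero_right (φ : LaurentOp H) : act φ (0 : ℤ → H) = 0 := by
  funext i; simp [act]

lemma act_shift (φ : LaurentOp H) (x : ℤ → H) :
    act φ (fun i => x (i + 1)) = fun i => (act φ x) (i + 1) := by
  funext i
  unfold act
  refine Finset.sum_congr rfl fun k _ => ?_
  have h : i - k + 1 = i + 1 - k := by omega
  show φ.coeff k (x (i - k + 1)) = φ.coeff k (x (i + 1 - k))
  rw [h]

lemma act_comm_op (φ : LaurentOp H) (ψ : H →L[ℂ] H)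
    (hcomm : ∀ k, ψ * φ.coeff k = φ.coeff k * ψ) (x : ℤ → H) :
    act φ (fun i => ψ (x i)) = fun i => ψ (act φ x i) := by
  funext i
  unfold act
  rw [map_sum]
  refine Finset.sum_congr rfl fun k _ => ?_
  have := congrArg (fun (T : H →L[ℂ] H) => T (x (i - k))) (hcomm k)
  simpa using this.symm

lemma act_pi_single (φ : LaurentOp H) (v : H) :
    act φ (Pi.single 0 v) = fun i => φ.coeff i v := by
  funext i
  unfold act
  rw [Finset.sum_eq_single i]
  · rw [sub_self, Pi.single_eq_same]
  · intro k _ hk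
    rw [Pi.single_eq_of_ne (by omega), map_zero]
  · intro hi
    rw [Finsupp.notMem_support_iff.1 hi, sub_self, Pi.single_eq_same]
    simp

lemma two_toReal_pos : (0:ℝ) < (ENNReal.toReal 2) := by norm_num

lemma memlp_shift {x : ℤ → H} (hx : Memℓp x 2) (k : ℤ) :
    Memℓp (fun i => x (i - k)) 2 := by
  refine memℓp_gen ?_
  have h := ((Equiv.subRight k).summable_iff (f := fun i => ‖x i‖ ^ (ENNReal.toReal 2))).2 (hx.summable two_toReal_pos)
  simpa [Function.comp_def, Equiv.subRight] using h

lemma memlp_comp (T : H →L[ℂ] H) {x : ℤ → H} (hx : Memℓp x 2) :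
    Memℓp (fun i => T (x i)) 2 := by
  refine memℓp_gen ?_
  replace hx := hx.summable two_toReal_pos
  refine Summable.of_nonneg_of_le (fun i => by positivity) (fun i => ?_) (hx.mul_left (‖T‖ ^ ((ENNReal.toReal 2))))
  calc ‖T (x i)‖ ^ (ENNReal.toReal 2) ≤ (‖T‖ * ‖x i‖) ^ (ENNReal.toReal 2) := by
        apply Real.rpow_le_rpow (norm_nonneg _) (T.le_opNorm _) (by norm_num)
    _ = ‖T‖ ^ (ENNReal.toReal 2) * ‖x i‖ ^ (ENNReal.toReal 2) :=
        Real.mul_rpow (norm_nonneg _) (norm_nonneg _)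

lemma memlp_act (φ : LaurentOp H) {x : ℤ → H} (hx : Memℓp x 2) :
    Memℓp (act φ x) 2 := by
  have : act φ x = fun i => ∑ k ∈ φ.coeff.support, (fun j => φ.coeff k (x (j - k))) i := rfl
  rw [this]
  exact Memℓp.finset_sum _ fun k _ => memlp_comp (φ.coeff k) (memlp_shift hx k)

lemma memlp_pi_single (a : ℤ) (v : H) : Memℓp (Pi.single a v : ℤ → H) 2 := by
  refine (memℓp_zero ?_).of_exponent_ge zero_le
  refine (Set.finite_singleton a).subset ?_
  intro j hj
  simp only [Set.mem_setOf_eq] at hj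
  simp only [Set.mem_singleton_iff]
  by_contra h
  exact hj (Pi.single_eq_of_ne (M := fun _ : ℤ => H) h v)


instance factOneLeTwo : Fact ((1:ENNReal) ≤ 2) := ⟨one_le_two⟩

def evalCLM' (j : ℤ) : lp (fun _ : ℤ => H) 2 →L[ℂ] H :=
  LinearMap.mkContinuous
    { toFun := fun y => y j
      map_add' := fun y z => rfl
      map_smul' := fun c y => rfl } 1
    (fun y => by
      rw [one_mul]
      exact lp.norm_apply_le_norm (by norm_num) y j)

@[simp] lemma evalCLM'_apply (j : ℤ) (y : lp (fun _ : ℤ => H) 2) :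
    evalCLM' j y = y j := rfl

def shiftCLM (k : ℤ) : lp (fun _ : ℤ => H) 2 →L[ℂ] lp (fun _ : ℤ => H) 2 :=
  LinearMap.mkContinuous
    { toFun := fun y => ⟨fun i => y (i - k), memlp_shift (lp.memℓp y) k⟩
      map_add' := fun y z => rfl
      map_smul' := fun c y => rfl } 1
    (fun y => by
      rw [one_mul]
      refine lp.norm_le_of_tsum_le two_toReal_pos (norm_nonneg _) ?_
      show ∑' i, ‖(y : ℤ → H) (i - k)‖ ^ (ENNReal.toReal 2) ≤ ‖y‖ ^ (ENNReal.toReal 2)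
      have h := (Equiv.subRight k).tsum_eq (f := fun i => ‖y i‖ ^ (ENNReal.toReal 2))
      calc ∑' i, ‖(y : ℤ → H) (i - k)‖ ^ (ENNReal.toReal 2)
          = ∑' i, ‖(y : ℤ → H) i‖ ^ (ENNReal.toReal 2) := by
            simpa [Equiv.subRight] using h
        _ ≤ ‖y‖ ^ (ENNReal.toReal 2) :=
            le_of_eq (lp.norm_rpow_eq_tsum two_toReal_pos y).symm)

@[simp] lemma shiftCLM_apply (k : ℤ) (y : lp (fun _ : ℤ => H) 2) (i : ℤ) :
    (shiftCLM k y : ℤ → H) i = y (i - k) := rfl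

def compCLM (T : H →L[ℂ] H) : lp (fun _ : ℤ => H) 2 →L[ℂ] lp (fun _ : ℤ => H) 2 :=
  LinearMap.mkContinuous
    { toFun := fun y => ⟨fun i => T (y i), memlp_comp T (lp.memℓp y)⟩
      map_add' := fun y z => by
        apply Subtype.ext
        funext i
        show T ((y + z : lp (fun _ : ℤ => H) 2) i) = T (y i) + T (z i)
        rw [lp.coeFn_add, Pi.add_apply, map_add]
      map_smul' := fun c y => by
        apply Subtype.ext
        funext i
        show T ((c • y : lp (fun _ : ℤ => H) 2) i) = c • T (y i)
        rw [lp.coeFn_smul, Pi.smul_apply, map_smul] } ‖T‖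
    (fun y => by
      refine lp.norm_le_of_tsum_le two_toReal_pos (by positivity) ?_
      show ∑' i, ‖T ((y : ℤ → H) i)‖ ^ (ENNReal.toReal 2) ≤ (‖T‖ * ‖y‖) ^ (ENNReal.toReal 2)
      calc ∑' i, ‖T ((y : ℤ → H) i)‖ ^ (ENNReal.toReal 2)
          ≤ ∑' i, ‖T‖ ^ (ENNReal.toReal 2) * ‖y i‖ ^ (ENNReal.toReal 2) := by
            refine Summable.tsum_le_tsum (fun i => ?_) ?_ ?_
            · rw [← Real.mul_rpow (norm_nonneg _) (norm_nonneg _)]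
              exact Real.rpow_le_rpow (norm_nonneg _) (T.le_opNorm _) (by norm_num)
            · refine Summable.of_nonneg_of_le (fun i => by positivity) (fun i => ?_)
                (((lp.memℓp y).summable two_toReal_pos).mul_left (‖T‖ ^ (ENNReal.toReal 2)))
              rw [← Real.mul_rpow (norm_nonneg _) (norm_nonneg _)]
              exact Real.rpow_le_rpow (norm_nonneg _) (T.le_opNorm _) (by norm_num)
            · exact ((lp.memℓp y).summable two_toReal_pos).mul_left _
        _ = ‖T‖ ^ (ENNReal.toReal 2) * ∑' i, ‖y i‖ ^ (ENNReal.toReal 2) := tsum_mul_left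
        _ = ‖T‖ ^ (ENNReal.toReal 2) * ‖y‖ ^ (ENNReal.toReal 2) := by
            rw [← lp.norm_rpow_eq_tsum two_toReal_pos y]
        _ = (‖T‖ * ‖y‖) ^ (ENNReal.toReal 2) :=
            (Real.mul_rpow (norm_nonneg _) (norm_nonneg _)).symm)

@[simp] lemma compCLM_apply (T : H →L[ℂ] H) (y : lp (fun _ : ℤ => H) 2) (i : ℤ) :
    (compCLM T y : ℤ → H) i = T (y i) := rfl

set_option linter.unusedSectionVars false

def actLp (φ : LaurentOp H) :
    lp (fun _ : ℤ => H) 2 →L[ℂ] lp (fun _ : ℤ => H) 2 :=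
  ∑ k ∈ φ.coeff.support, (compCLM (φ.coeff k)).comp (shiftCLM k)

lemma actLp_coe (φ : LaurentOp H) (y : lp (fun _ : ℤ => H) 2) :
    ((actLp φ y : lp (fun _ : ℤ => H) 2) : ℤ → H) = act φ (⇑y) := by
  funext i
  rw [actLp, ContinuousLinearMap.sum_apply, lp.coeFn_sum, Finset.sum_apply]
  exact Finset.sum_congr rfl fun k _ => rfl

lemma isClosed_preimage_act {S : Set (ℤ → H)}
    (hS : IsClosed {y : lp (fun _ : ℤ => H) 2 | (y : ℤ → H) ∈ S}) (χ : LaurentOp H) :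
    IsClosed {y : lp (fun _ : ℤ => H) 2 | act χ (⇑y) ∈ S} := by
  have h : {y : lp (fun _ : ℤ => H) 2 | act χ (⇑y) ∈ S}
      = (actLp χ) ⁻¹' {y : lp (fun _ : ℤ => H) 2 | (y : ℤ → H) ∈ S} := by
    ext y
    simp only [Set.mem_setOf_eq, Set.mem_preimage, actLp_coe]
  rw [h]
  exact hS.preimage (actLp χ).continuous

lemma isClosed_vanish (χ : LaurentOp H) (n : ℤ) :
    IsClosed {y : lp (fun _ : ℤ => H) 2 | ∀ i > n, act χ (⇑y) i = 0} := by
  have h : {y : lp (fun _ : ℤ => H) 2 | ∀ i > n, act χ (⇑y) i = 0}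
      = ⋂ i ∈ {i : ℤ | n < i}, ((evalCLM' i).comp (actLp χ)) ⁻¹' {0} := by
    ext y
    simp only [Set.mem_setOf_eq, Set.mem_iInter, Set.mem_preimage,
      ContinuousLinearMap.comp_apply, evalCLM'_apply, Set.mem_singleton_iff, actLp_coe]
  rw [h]
  exact isClosed_biInter fun i _ =>
    isClosed_singleton.preimage ((evalCLM' i).comp (actLp χ)).continuous

lemma coeff_mem {A : VonNeumannAlgebra H} {φ ψ : LaurentOp H}
    (hφ : ∀ i, φ.coeff i ∈ A) (hψ : ∀ i, ψ.coeff i ∈ A) (n : ℤ) : (φ * ψ).coeff n ∈ A := by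
  classical
  rw [AddMonoidAlgebra.mul_apply]
  rw [Finsupp.sum]
  refine sum_mem fun a _ => ?_
  rw [Finsupp.sum]
  refine sum_mem fun b _ => ?_
  split
  · exact mul_mem (hφ a) (hψ b)
  · exact zero_mem A.toStarSubalgebra

lemma lstar_coeff_mem {A : VonNeumannAlgebra H} {φ : LaurentOp H}
    (hφ : ∀ i, φ.coeff i ∈ A) (n : ℤ) : (lstar φ).coeff n ∈ A := by
  rw [lstar_apply]
  exact star_mem (hφ (-n))

lemma eps1_lstar (φ : LaurentOp H) : eps1 (lstar φ) = star (eps1 φ) := by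
  induction φ using AddMonoidAlgebra.induction_linear with
  | zero => rw [lstar_zero]; unfold eps1; simp
  | add f g hf hg => rw [lstar_add, eps1_add, eps1_add, hf, hg, star_add]
  | single a T => rw [lstar_single, eps1_single, eps1_single]

lemma inPPU_lstar {A : VonNeumannAlgebra H} {φ : LaurentOp H} (hφ : InPPU A φ) :
    InPPU A (lstar φ) := by
  obtain ⟨hmem, h1, h2, he⟩ := hφ
  exact ⟨lstar_coeff_mem hmem, by rw [lstar_lstar]; exact h2,
    by rw [lstar_lstar]; exact h1, by rw [eps1_lstar, he, star_one]⟩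

lemma inPPU_mul {A : VonNeumannAlgebra H} {φ ψ : LaurentOp H}
    (hφ : InPPU A φ) (hψ : InPPU A ψ) : InPPU A (φ * ψ) := by
  obtain ⟨hm1, ha1, hb1, he1⟩ := hφ
  obtain ⟨hm2, ha2, hb2, he2⟩ := hψ
  refine ⟨coeff_mem hm1 hm2, ?_, ?_, ?_⟩
  · rw [lstar_mul]
    calc lstar ψ * lstar φ * (φ * ψ) = lstar ψ * (lstar φ * φ) * ψ := by noncomm_ring
      _ = 1 := by rw [ha1, mul_one, ha2]
  · rw [lstar_mul]
    calc φ * ψ * (lstar ψ * lstar φ) = φ * (ψ * lstar ψ) * lstar φ := by noncomm_ring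
      _ = 1 := by rw [hb2, mul_one, hb1]
  · rw [eps1_mul, he1, he2, one_mul]

lemma Hmn_zero_mem (n : ℤ) : (0 : ℤ → H) ∈ Hmn H n := ⟨zero_memℓp, fun _ _ => rfl⟩

lemma Hmn_add {n : ℤ} {x y : ℤ → H} (hx : x ∈ Hmn H n) (hy : y ∈ Hmn H n) :
    x + y ∈ Hmn H n :=
  ⟨hx.1.add hy.1, fun i hi => by
    show x i + y i = 0
    rw [hx.2 i hi, hy.2 i hi, add_zero]⟩

lemma Hmn_smul {n : ℤ} (c : ℂ) {x : ℤ → H} (hx : x ∈ Hmn H n) : c • x ∈ Hmn H n :=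
  ⟨hx.1.const_smul c, fun i hi => by
    show c • x i = 0
    rw [hx.2 i hi, smul_zero]⟩

lemma Hmn_sub {n : ℤ} {x y : ℤ → H} (hx : x ∈ Hmn H n) (hy : y ∈ Hmn H n) :
    x - y ∈ Hmn H n := by
  have h : x - y = x + (-1 : ℂ) • y := by
    funext i
    show x i - y i = x i + (-1:ℂ) • y i
    rw [neg_one_smul, sub_eq_add_neg]
  rw [h]
  exact Hmn_add hx (Hmn_smul _ hy)

lemma memlp_shift' {x : ℤ → H} (hx : Memℓp x 2) : Memℓp (fun i => x (i + 1)) 2 := by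
  have h := memlp_shift hx (-1)
  simpa [sub_neg_eq_add] using h

lemma Hmn_shift {n : ℤ} {x : ℤ → H} (hx : x ∈ Hmn H n) :
    (fun i => x (i + 1)) ∈ Hmn H n :=
  ⟨memlp_shift' hx.1, fun i hi => hx.2 (i + 1) (by omega)⟩

lemma Hmn_mono {m n : ℤ} (h : m ≤ n) : Hmn H m ⊆ Hmn H n :=
  fun x hx => ⟨hx.1, fun i hi => hx.2 i (by omega)⟩

lemma Hmn_comp {n : ℤ} (ψ : H →L[ℂ] H) {x : ℤ → H} (hx : x ∈ Hmn H n) :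
    (fun i => ψ (x i)) ∈ Hmn H n :=
  ⟨memlp_comp ψ hx.1, fun i hi => by show ψ (x i) = 0; rw [hx.2 i hi, map_zero]⟩

lemma Hmn_single {a n : ℤ} (h : a ≤ n) (v : H) : (Pi.single a v : ℤ → H) ∈ Hmn H n :=
  ⟨memlp_pi_single a v, fun i hi => Pi.single_eq_of_ne (M := fun _ : ℤ => H) (show i ≠ a by omega) v⟩

lemma mem_support_lstar {φ : LaurentOp H} {k : ℤ} :
    k ∈ (lstar φ).coeff.support ↔ -k ∈ φ.coeff.support := by
  rw [Finsupp.mem_support_iff, Finsupp.mem_support_iff, lstar_apply]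
  constructor
  · intro h h'
    rw [h'] at h
    exact h (star_zero _)
  · intro h h'
    exact h (by simpa using congrArg star h')

lemma act_mem_Hmn {φ : LaurentOp H} {c d : ℤ} (hφ : ∀ k ∈ φ.coeff.support, k ≤ d)
    {x : ℤ → H} (hx : x ∈ Hmn H c) : act φ x ∈ Hmn H (c + d) := by
  refine ⟨memlp_act φ hx.1, fun i hi => ?_⟩
  refine Finset.sum_eq_zero fun k hk => ?_
  rw [hx.2 (i - k) (by have := hφ k hk; omega), map_zero]

lemma act_inv_cancel {φ ψ : LaurentOp H} (h : φ * ψ = 1) (x : ℤ → H) :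
    act φ (act ψ x) = x := by
  rw [← act_mul, h, act_one]

lemma actH_mul (φ ψ : LaurentOp H) : actH (φ * ψ) = act φ '' actH ψ := by
  unfold actH
  rw [Set.image_image]
  exact Set.image_congr fun x _ => act_mul φ ψ x

lemma mem_actH_iff {φ : LaurentOp H} (hφ1 : lstar φ * φ = 1) (hφ2 : φ * lstar φ = 1)
    {x : ℤ → H} (hx : Memℓp x 2) :
    x ∈ actH φ ↔ act (lstar φ) x ∈ Hmn H 0 := by
  constructor
  · rintro ⟨y, hy, rfl⟩
    rw [act_inv_cancel hφ1]
    exact hy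
  · intro h
    exact ⟨act (lstar φ) x, h, act_inv_cancel hφ2 x⟩

lemma isClosed_actH {φ : LaurentOp H} (hφ1 : lstar φ * φ = 1) (hφ2 : φ * lstar φ = 1) :
    IsClosed {y : lp (fun _ : ℤ => H) 2 | (y : ℤ → H) ∈ actH φ} := by
  have h : {y : lp (fun _ : ℤ => H) 2 | (y : ℤ → H) ∈ actH φ}
      = {y : lp (fun _ : ℤ => H) 2 | ∀ i > 0, act (lstar φ) (⇑y) i = 0} := by
    ext y
    rw [Set.mem_setOf_eq, Set.mem_setOf_eq, mem_actH_iff hφ1 hφ2 (lp.memℓp y)]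
    exact ⟨fun h i hi => h.2 i hi, fun h => ⟨memlp_act _ (lp.memℓp y), h⟩⟩
  rw [h]
  exact isClosed_vanish _ 0

section Projections

variable (M : Submodule ℂ H) (hM : IsClosed (M : Set H))

lemma projL_mem (v : H) : projL M hM v ∈ M := by
  haveI : CompleteSpace M := hM.completeSpace_coe
  exact (M.orthogonalProjectionOnto v).2

lemma projL_eq_self {v : H} (hv : v ∈ M) : projL M hM v = v := by
  haveI : CompleteSpace M := hM.completeSpace_coe
  show M.starProjection v = v
  rw [Submodule.starProjection_eq_self_iff.2 hv]

lemma projL_eq_zero {v : H} (hv : v ∈ Mᗮ) : projL M hM v = 0 := by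
  haveI : CompleteSpace M := hM.completeSpace_coe
  show (M.orthogonalProjectionOnto v : H) = 0
  rw [Submodule.orthogonalProjectionOnto_apply_of_mem_orthogonal hv]
  rfl

lemma projL_add_orth (v : H) :
    projL M hM v + projL Mᗮ M.isClosed_orthogonal v = v := by
  haveI : CompleteSpace M := hM.completeSpace_coe
  exact M.starProjection_add_starProjection_orthogonal v

lemma projL_orth_eq_zero {v : H} (hv : v ∈ M) :
    projL Mᗮ M.isClosed_orthogonal v = 0 :=
  projL_eq_zero Mᗮ M.isClosed_orthogonal (M.le_orthogonal_orthogonal hv)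

lemma projL_add_orth_eq_one :
    projL M hM + projL Mᗮ M.isClosed_orthogonal = 1 := by
  ext v
  exact projL_add_orth M hM v

lemma projL_mul_self : projL M hM * projL M hM = projL M hM := by
  ext v
  exact projL_eq_self M hM (projL_mem M hM v)

lemma projL_orth_mul_self :
    projL Mᗮ M.isClosed_orthogonal * projL Mᗮ M.isClosed_orthogonal
      = projL Mᗮ M.isClosed_orthogonal :=
  projL_mul_self Mᗮ M.isClosed_orthogonal

lemma projL_mul_orth : projL M hM * projL Mᗮ M.isClosed_orthogonal = 0 := by
  ext v
  exact projL_eq_zero M hM (projL_mem Mᗮ M.isClosed_orthogonal v)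

lemma projL_orth_mul : projL Mᗮ M.isClosed_orthogonal * projL M hM = 0 := by
  ext v
  exact projL_orth_eq_zero M (projL_mem M hM v)

lemma star_projL : star (projL M hM) = projL M hM := by
  haveI : CompleteSpace M := hM.completeSpace_coe
  exact isSelfAdjoint_starProjection M

lemma invariantC_orth {A : VonNeumannAlgebra H} (hinv : InvariantC A M) :
    InvariantC A Mᗮ := by
  intro ψ hψ v hv
  rw [Submodule.mem_orthogonal]
  intro u hu
  have hst : star ψ ∈ A.commutant := star_mem hψ
  have h1 : (inner ℂ (star ψ u) v : ℂ) = 0 := by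
    rw [Submodule.mem_orthogonal] at hv
    exact hv _ (hinv _ hst u hu)
  rw [← h1, ContinuousLinearMap.star_eq_adjoint, ContinuousLinearMap.adjoint_inner_left]

lemma projL_mem_vna {A : VonNeumannAlgebra H} (hinv : InvariantC A M) :
    projL M hM ∈ A := by
  have key : ∀ ψ ∈ A.commutant, ψ * projL M hM = projL M hM * ψ := by
    intro ψ hψ
    ext v
    show ψ (projL M hM v) = projL M hM (ψ v)
    conv_rhs => rw [← projL_add_orth M hM v]
    rw [map_add, map_add]
    rw [projL_eq_self M hM (hinv ψ hψ _ (projL_mem M hM v)),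
      projL_eq_zero M hM (invariantC_orth M hinv ψ hψ _ (projL_mem Mᗮ M.isClosed_orthogonal v)),
      add_zero]
  have h : projL M hM ∈ A.commutant.commutant := by
    rw [VonNeumannAlgebra.mem_commutant_iff]
    intro g hg
    exact key g hg
  rwa [VonNeumannAlgebra.commutant_commutant] at h

end Projections

section PElSec

variable (M : Submodule ℂ H) (hM : IsClosed (M : Set H))

lemma lstar_pEl : lstar (pEl M hM) =
    AddMonoidAlgebra.single (-1 : ℤ) (projL M hM) +
      AddMonoidAlgebra.single (0 : ℤ) (projL Mᗮ M.isClosed_orthogonal) := by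
  unfold pEl
  rw [lstar_add, lstar_single, lstar_single, star_projL, star_projL, neg_zero]

lemma lstar_pEl_mul : lstar (pEl M hM) * pEl M hM = 1 := by
  rw [lstar_pEl]
  unfold pEl
  rw [add_mul, mul_add, mul_add,
    AddMonoidAlgebra.single_mul_single, AddMonoidAlgebra.single_mul_single,
    AddMonoidAlgebra.single_mul_single, AddMonoidAlgebra.single_mul_single,
    projL_mul_self, projL_mul_orth, projL_orth_mul, projL_orth_mul_self]
  show AddMonoidAlgebra.single (-1 + 1 : ℤ) (projL M hM) + AddMonoidAlgebra.single (-1 + 0 : ℤ) 0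
      + (AddMonoidAlgebra.single (0 + 1 : ℤ) 0 + AddMonoidAlgebra.single (0 + 0 : ℤ) (projL Mᗮ M.isClosed_orthogonal)) = 1
  rw [AddMonoidAlgebra.single_zero, AddMonoidAlgebra.single_zero, add_zero, zero_add]
  rw [show (-1 + 1 : ℤ) = 0 by omega, show (0 + 0 : ℤ) = 0 by omega,
    ← AddMonoidAlgebra.single_add, projL_add_orth_eq_one]
  rfl

lemma pEl_mul_lstar : pEl M hM * lstar (pEl M hM) = 1 := by
  rw [lstar_pEl]
  unfold pEl
  rw [add_mul, mul_add, mul_add,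
    AddMonoidAlgebra.single_mul_single, AddMonoidAlgebra.single_mul_single,
    AddMonoidAlgebra.single_mul_single, AddMonoidAlgebra.single_mul_single,
    projL_mul_self, projL_mul_orth, projL_orth_mul, projL_orth_mul_self]
  show AddMonoidAlgebra.single (1 + -1 : ℤ) (projL M hM) + AddMonoidAlgebra.single (1 + 0 : ℤ) 0
      + (AddMonoidAlgebra.single (0 + -1 : ℤ) 0 + AddMonoidAlgebra.single (0 + 0 : ℤ) (projL Mᗮ M.isClosed_orthogonal)) = 1
  rw [AddMonoidAlgebra.single_zero, AddMonoidAlgebra.single_zero, add_zero, zero_add]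
  rw [show (1 + -1 : ℤ) = 0 by omega, show (0 + 0 : ℤ) = 0 by omega,
    ← AddMonoidAlgebra.single_add, projL_add_orth_eq_one]
  rfl

lemma eps1_pEl : eps1 (pEl M hM) = 1 := by
  unfold pEl
  rw [eps1_add, eps1_single, eps1_single, projL_add_orth_eq_one]

lemma inPPU_pEl {A : VonNeumannAlgebra H} (hinv : InvariantC A M) :
    InPPU A (pEl M hM) := by
  refine ⟨fun i => ?_, lstar_pEl_mul M hM, pEl_mul_lstar M hM, eps1_pEl M hM⟩
  unfold pEl
  rw [AddMonoidAlgebra.coeff_add, Finsupp.add_apply, AddMonoidAlgebra.coeff_single,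
    AddMonoidAlgebra.coeff_single, Finsupp.single_apply, Finsupp.single_apply]
  have hπ : projL M hM ∈ A := projL_mem_vna M hM hinv
  have hπ' : projL Mᗮ M.isClosed_orthogonal ∈ A :=
    projL_mem_vna Mᗮ M.isClosed_orthogonal (invariantC_orth M hinv)
  split <;> split <;>
    first
      | exact add_mem hπ hπ'
      | exact add_mem hπ (zero_mem A.toStarSubalgebra)
      | exact add_mem (zero_mem A.toStarSubalgebra) hπ'
      | exact add_mem (zero_mem A.toStarSubalgebra) (zero_mem A.toStarSubalgebra)

lemma act_pEl_apply (x : ℤ → H) (i : ℤ) :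
    act (pEl M hM) x i = projL M hM (x (i - 1)) + projL Mᗮ M.isClosed_orthogonal (x i) := by
  unfold pEl
  rw [act_add_left]
  show act _ x i + act _ x i = _
  rw [act_single, act_single]
  simp only [sub_zero]

lemma act_lstar_pEl_apply (x : ℤ → H) (i : ℤ) :
    act (lstar (pEl M hM)) x i
      = projL M hM (x (i + 1)) + projL Mᗮ M.isClosed_orthogonal (x i) := by
  rw [lstar_pEl, act_add_left]
  show act _ x i + act _ x i = _
  simp only [act_single, sub_zero, sub_neg_eq_add]

end PElSec

lemma inPPU_singleOne (A : VonNeumannAlgebra H) (n : ℤ) :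
    InPPU A (AddMonoidAlgebra.single n (1 : H →L[ℂ] H)) := by
  refine ⟨fun i => ?_, ?_, ?_, ?_⟩
  · rw [AddMonoidAlgebra.coeff_single, Finsupp.single_apply]
    split
    · exact one_mem A.toStarSubalgebra
    · exact zero_mem A.toStarSubalgebra
  · rw [lstar_single, star_one, AddMonoidAlgebra.single_mul_single, one_mul,
      show (-n + n : ℤ) = 0 by omega]
    rfl
  · rw [lstar_single, star_one, AddMonoidAlgebra.single_mul_single, one_mul,
      show (n + -n : ℤ) = 0 by omega]
    rfl
  · rw [eps1_single]

lemma actH_singleOne (n : ℤ) :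
    actH (AddMonoidAlgebra.single n (1 : H →L[ℂ] H)) = Hmn H n := by
  ext x
  constructor
  · rintro ⟨y, hy, rfl⟩
    rw [act_single]
    refine ⟨memlp_shift hy.1 n, fun i hi => ?_⟩
    exact hy.2 (i - n) (by omega)
  · intro hx
    refine ⟨fun i => x (i + n), ⟨?_, fun i hi => hx.2 (i + n) (by omega)⟩, ?_⟩
    · have h := memlp_shift hx.1 (-n)
      simpa [sub_neg_eq_add] using h
    · rw [act_single]
      funext i
      show (1 : H →L[ℂ] H) (x (i - n + n)) = x i
      rw [show i - n + n = i by omega]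
      rfl

lemma lp_single_coe (a : ℤ) (v : H) :
    ((lp.single (E := fun _ : ℤ => H) 2 a v : lp (fun _ : ℤ => H) 2) : ℤ → H) = Pi.single a v := by
  funext j
  by_cases h : j = a
  · subst h
    rw [lp.single_apply_self (E := fun _ : ℤ => H), Pi.single_eq_same]
  · rw [lp.single_apply_ne (E := fun _ : ℤ => H) 2 a v h, Pi.single_eq_of_ne h]

def singleCLM (a : ℤ) : H →L[ℂ] lp (fun _ : ℤ => H) 2 :=
  LinearMap.mkContinuous
    { toFun := fun v => lp.single (E := fun _ : ℤ => H) 2 a v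
      map_add' := fun v w => by
        apply lp.ext
        rw [lp_single_coe, lp.coeFn_add, lp_single_coe, lp_single_coe, ← Pi.single_add]
      map_smul' := fun c v => by
        apply lp.ext
        rw [lp_single_coe, lp.coeFn_smul, lp_single_coe]
        show (Pi.single a (c • v) : ℤ → H) = c • (Pi.single a v : ℤ → H)
        rw [Pi.single_smul] } 1
    (fun v => by
      rw [one_mul]
      exact le_of_eq (lp.norm_single (E := fun _ : ℤ => H) (by norm_num) a v))

lemma singleCLM_coe (a : ℤ) (v : H) :
    ((singleCLM a v : lp (fun _ : ℤ => H) 2) : ℤ → H) = Pi.single a v :=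
  lp_single_coe a v

lemma actH_subset_iff {A : VonNeumannAlgebra H} {φ φ' : LaurentOp H}
    (hφ : InPPU A φ) (hφ' : InPPU A φ') :
    actH φ ⊆ actH φ' ↔ InPPUplus A (lstar φ * φ') := by
  obtain ⟨hm, ha, hb, he⟩ := hφ
  obtain ⟨hm', ha', hb', he'⟩ := hφ'
  constructor
  · intro hsub
    refine ⟨inPPU_mul (inPPU_lstar ⟨hm, ha, hb, he⟩) ⟨hm', ha', hb', he'⟩, ?_⟩
    have key : ∀ k > (0:ℤ), (lstar φ' * φ).coeff k = 0 := by
      intro k hk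
      apply ContinuousLinearMap.ext
      intro v
      obtain ⟨z, hz, hzeq⟩ := hsub ⟨Pi.single 0 v, Hmn_single le_rfl v, rfl⟩
      have h3 : act (lstar φ' * φ) (Pi.single 0 v) = z := by
        rw [act_mul, ← hzeq, act_inv_cancel ha']
      have h4 : (lstar φ' * φ).coeff k v = z k := by
        rw [← h3, act_pi_single]
      rw [ContinuousLinearMap.zero_apply, h4]
      exact hz.2 k hk
    intro i hi
    have h2 : lstar φ * φ' = lstar (lstar φ' * φ) := by
      rw [lstar_mul, lstar_lstar]
    rw [h2, lstar_apply, key (-i) (by omega), star_zero]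
  · rintro ⟨hppu, hneg⟩
    rintro x ⟨y, hy, rfl⟩
    refine ⟨act (lstar (lstar φ * φ')) y, ?_, ?_⟩
    · have hsupp : ∀ k ∈ (lstar (lstar φ * φ')).coeff.support, k ≤ 0 := by
        intro k hk
        rw [mem_support_lstar] at hk
        by_contra h
        exact (Finsupp.mem_support_iff.1 hk) (hneg (-k) (by omega))
      have h := act_mem_Hmn hsupp hy
      simpa using h
    · rw [← act_mul]
      have h : φ' * lstar (lstar φ * φ') = φ := by
        rw [lstar_mul, lstar_lstar, ← mul_assoc, hb', one_mul]
      rw [h]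

lemma surj_aux (A : VonNeumannAlgebra H) : ∀ r : ℕ, ∀ m n : ℤ, n - m = (r : ℤ) →
    ∀ S : Set (ℤ → H), IsInvClosed A S → Hmn H m ⊆ S → S ⊆ Hmn H n →
    ∃ φ : LaurentOp H, InPPU A φ ∧ actH φ = S := by
  intro r
  induction r with
  | zero =>
    intro m n hr S hS hmS hSn
    have hmn : m = n := by omega
    subst hmn
    refine ⟨AddMonoidAlgebra.single m 1, inPPU_singleOne A m, ?_⟩
    rw [actH_singleOne]
    exact Set.Subset.antisymm hmS hSn
  | succ r ih =>
    intro m n hr S hS hmS hSn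
    obtain ⟨hlp, hclosed, h0, hadd, hsmul, hshift, hcommS⟩ := hS
    have hSsub : ∀ {x y : ℤ → H}, x ∈ S → y ∈ S → x - y ∈ S := by
      intro x y hx hy
      have h : x - y = x + (-1 : ℂ) • y := by
        funext i
        show x i - y i = x i + (-1:ℂ) • y i
        rw [neg_one_smul, sub_eq_add_neg]
      rw [h]
      exact hadd x hx _ (hsmul (-1) y hy)
    -- the subspace M
    set M : Submodule ℂ H :=
      { carrier := {v : H | Pi.single (m+1) v ∈ S}
        add_mem' := fun {v} {w} hv hw => by
          have h : (Pi.single (m+1) (v + w) : ℤ → H)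
              = Pi.single (m+1) v + Pi.single (m+1) w := by
            rw [Pi.single_add]
          show Pi.single (m+1) (v + w) ∈ S
          rw [h]
          exact hadd _ hv _ hw
        zero_mem' := by
          show (Pi.single (m+1) (0:H) : ℤ → H) ∈ S
          rw [Pi.single_zero]
          exact h0
        smul_mem' := fun c v hv => by
          show (Pi.single (m+1) (c • v) : ℤ → H) ∈ S
          rw [Pi.single_smul]
          exact hsmul c _ hv } with hMdef
    have hMmem : ∀ v : H, v ∈ M ↔ (Pi.single (m+1) v : ℤ → H) ∈ S := fun v => Iff.rfl
    -- M is closed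
    have hMclosed : IsClosed (M : Set H) := by
      have h : (M : Set H) = (singleCLM (m+1)) ⁻¹'
          {y : lp (fun _ : ℤ => H) 2 | (y : ℤ → H) ∈ S} := by
        ext v
        rw [Set.mem_preimage, Set.mem_setOf_eq, singleCLM_coe]
        exact hMmem v
      rw [h]
      exact hclosed.preimage (singleCLM (m+1)).continuous
    -- M is invariant under the commutant
    have hMinv : InvariantC A M := by
      intro ψ hψ v hv
      rw [hMmem]
      have h : (Pi.single (m+1) (ψ v) : ℤ → H) = fun i => ψ ((Pi.single (m+1) v : ℤ → H) i) := by
        funext i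
        by_cases hi : i = m+1
        · subst hi
          rw [Pi.single_eq_same, Pi.single_eq_same]
        · rw [Pi.single_eq_of_ne hi, Pi.single_eq_of_ne hi, map_zero]
      rw [h]
      exact hcommS ψ hψ _ hv
    -- delta extraction
    have hdelta : ∀ x ∈ S, x ∈ Hmn H (m+1) → (Pi.single (m+1) (x (m+1)) : ℤ → H) ∈ S := by
      intro x hx hxm
      have hz : x - Pi.single (m+1) (x (m+1)) ∈ Hmn H m := by
        refine ⟨(hlp x hx).sub (memlp_pi_single _ _), fun i hi => ?_⟩
        show x i - (Pi.single (m+1) (x (m+1)) : ℤ → H) i = 0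
        by_cases hi2 : i = m + 1
        · subst hi2
          rw [Pi.single_eq_same, sub_self]
        · rw [Pi.single_eq_of_ne hi2, hxm.2 i (by omega), sub_zero]
      have h : (Pi.single (m+1) (x (m+1)) : ℤ → H)
          = x - (x - Pi.single (m+1) (x (m+1))) := by
        funext i
        show (Pi.single (m+1) (x (m+1)) : ℤ → H) i = x i - (x i - (Pi.single (m+1) (x (m+1)) : ℤ → H) i)
        rw [sub_sub_cancel]
      rw [h]
      exact hSsub hx (hmS hz)
    -- iterated shift
    have hshiftIter : ∀ (j : ℕ), ∀ x ∈ S, (fun i => x (i + (j:ℤ))) ∈ S := by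
      intro j
      induction j with
      | zero =>
        intro x hx
        have h : (fun i => x (i + ((0:ℕ):ℤ))) = x := by
          funext i
          norm_num
        rw [h]
        exact hx
      | succ j hj =>
        intro x hx
        have h1 := hshift _ (hj x hx)
        have h : (fun i => x (i + ((j+1:ℕ):ℤ))) = fun i => (fun i' => x (i' + (j:ℤ))) (i + 1) := by
          funext i
          show x (i + ((j+1:ℕ):ℤ)) = x (i + 1 + (j:ℤ))
          congr 1
          push_cast
          omega
        rw [h]
        exact h1
    -- top coefficients lie in M
    have htop : ∀ x ∈ S, x n ∈ M := by
      intro x hx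
      have hj : ((n - (m+1)).toNat : ℤ) = n - (m+1) := Int.toNat_of_nonneg (by omega)
      set y : ℤ → H := fun i => x (i + ((n - (m+1)).toNat : ℤ)) with hy
      have hyS : y ∈ S := hshiftIter _ x hx
      have hyH : y ∈ Hmn H (m+1) := by
        refine ⟨hlp y hyS, fun i hi => ?_⟩
        show x (i + ((n - (m+1)).toNat : ℤ)) = 0
        exact (hSn hx).2 _ (by omega)
      have hyval : y (m+1) = x n := by
        show x (m + 1 + ((n - (m+1)).toNat : ℤ)) = x n
        congr 1
        omega
      rw [hMmem]
      rw [← hyval]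
      exact hdelta y hyS hyH
    -- the paraunitary factor
    set q : LaurentOp H := pEl M hMclosed with hq
    have hq1 : lstar q * q = 1 := lstar_pEl_mul M hMclosed
    have hq2 : q * lstar q = 1 := pEl_mul_lstar M hMclosed
    have hqPPU : InPPU A q := inPPU_pEl M hMclosed hMinv
    have hqlstarPPU : InPPU A (lstar q) := inPPU_lstar hqPPU
    set S' : Set (ℤ → H) := act (lstar q) '' S with hS'
    have hS'mem : ∀ y : ℤ → H, y ∈ S' ↔ act q y ∈ S := by
      intro y
      constructor
      · rintro ⟨x, hx, rfl⟩
        rw [act_inv_cancel hq2]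
        exact hx
      · intro h
        exact ⟨act q y, h, act_inv_cancel hq1 y⟩
    -- S' is invariant and closed
    have hS'inv : IsInvClosed A S' := by
      refine ⟨?_, ?_, ?_, ?_, ?_, ?_, ?_⟩
      · rintro x ⟨y, hy, rfl⟩
        exact memlp_act _ (hlp y hy)
      · have h : {y : lp (fun _ : ℤ => H) 2 | (y : ℤ → H) ∈ S'}
            = {y : lp (fun _ : ℤ => H) 2 | act q (⇑y) ∈ S} := by
          ext y
          rw [Set.mem_setOf_eq, Set.mem_setOf_eq, hS'mem]
        rw [h]
        exact isClosed_preimage_act hclosed q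
      · exact ⟨0, h0, act_zero_right _⟩
      · rintro x ⟨x1, hx1, rfl⟩ y ⟨y1, hy1, rfl⟩
        exact ⟨x1 + y1, hadd x1 hx1 y1 hy1, act_add_right _ x1 y1⟩
      · rintro c x ⟨x1, hx1, rfl⟩
        exact ⟨c • x1, hsmul c x1 hx1, act_smul_right _ c x1⟩
      · rintro x ⟨x1, hx1, rfl⟩
        refine ⟨fun i => x1 (i + 1), hshift x1 hx1, ?_⟩
        rw [act_shift]
      · rintro ψ hψ x ⟨x1, hx1, rfl⟩
        refine ⟨fun i => ψ (x1 i), hcommS ψ hψ x1 hx1, ?_⟩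
        rw [act_comm_op]
        intro k
        exact (VonNeumannAlgebra.mem_commutant_iff.1 hψ _ (hqlstarPPU.1 k)).symm
    -- S' ⊆ Hmn (n-1)
    have hS'sub : S' ⊆ Hmn H (n-1) := by
      rintro x ⟨y, hy, rfl⟩
      refine ⟨memlp_act _ (hlp y hy), fun i hi => ?_⟩
      rw [hq, act_lstar_pEl_apply]
      rw [(hSn hy).2 (i+1) (by omega), map_zero, zero_add]
      by_cases hin : i = n
      · subst hin
        exact projL_orth_eq_zero M (htop y hy)
      · rw [(hSn hy).2 i (by omega), map_zero]
    -- Hmn m ⊆ S'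
    have hmS' : Hmn H m ⊆ S' := by
      intro w hw
      have hzS : act q w ∈ S := by
        have hz2 : act q w - Pi.single (m+1) (projL M hMclosed (w m)) ∈ Hmn H m := by
          refine ⟨(memlp_act _ hw.1).sub (memlp_pi_single _ _), fun i hi => ?_⟩
          show act q w i - (Pi.single (m+1) (projL M hMclosed (w m)) : ℤ → H) i = 0
          rw [hq, act_pEl_apply]
          by_cases hi2 : i = m + 1
          · subst hi2
            rw [Pi.single_eq_same, hw.2 (m+1) (by omega), map_zero, add_zero]
            show projL M hMclosed (w (m + 1 - 1)) - projL M hMclosed (w m) = 0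
            rw [show m + 1 - 1 = m by omega, sub_self]
          · rw [Pi.single_eq_of_ne hi2, hw.2 i (by omega), map_zero,
              hw.2 (i-1) (by omega), map_zero, add_zero, sub_zero]
        have hsingleS : (Pi.single (m+1) (projL M hMclosed (w m)) : ℤ → H) ∈ S := by
          rw [← hMmem]
          exact projL_mem M hMclosed (w m)
        have h : act q w = (act q w - Pi.single (m+1) (projL M hMclosed (w m)))
            + Pi.single (m+1) (projL M hMclosed (w m)) := by
          funext i
          show act q w i = (act q w i - (Pi.single (m+1) (projL M hMclosed (w m)) : ℤ → H) i) + (Pi.single (m+1) (projL M hMclosed (w m)) : ℤ → H) i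
          rw [sub_add_cancel]
        rw [h]
        exact hadd _ (hmS hz2) _ hsingleS
      rw [hS'mem]
      exact hzS
    -- induction
    obtain ⟨φ', hφ'ppu, hφ'act⟩ := ih m (n-1) (by omega) S' hS'inv hmS' hS'sub
    refine ⟨q * φ', inPPU_mul hqPPU hφ'ppu, ?_⟩
    rw [actH_mul, hφ'act]
    ext x
    constructor
    · rintro ⟨y, ⟨z, hz, rfl⟩, rfl⟩
      rw [act_inv_cancel hq2]
      exact hz
    · intro hx
      exact ⟨act (lstar q) x, ⟨x, hx, rfl⟩, act_inv_cancel hq2 x⟩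

/--
Let `A` be a von Neumann algebra on `H`.  For `φ, φ' ∈ PPU(A)` one has
`φ·H[[t⁻¹]] ⊆ φ'·H[[t⁻¹]]` if and only if `φ⁻¹φ' = φ*·φ' ∈ PPU⁺(A)`.  Consequently
`Ω : φ ↦ φ·H[[t⁻¹]]` is an order isomorphism from `PPU(A)`, ordered by `φ ≤ φ'` iff
`φ⁻¹φ' ∈ PPU⁺(A)`, onto `sub(H)_{−∞}^{∞}` ordered by inclusion, and in particular an
isomorphism of lattices.
-/
theorem stmt15 (A : VonNeumannAlgebra H) :
    (∀ φ φ' : LaurentOp H, InPPU A φ → InPPU A φ' →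
      (actH φ ⊆ actH φ' ↔ InPPUplus A (lstar φ * φ'))) ∧
    Set.BijOn (actH (H := H)) {φ : LaurentOp H | InPPU A φ}
      {S : Set (ℤ → H) | IsInvClosed A S ∧
        ∃ m n : ℤ, m ≤ n ∧ Hmn H m ⊆ S ∧ S ⊆ Hmn H n} := by
  refine ⟨fun φ φ' h h' => actH_subset_iff h h', ?_, ?_, ?_⟩
  · -- MapsTo
    intro φ hφ
    obtain ⟨hm, ha, hb, he⟩ := hφ
    constructor
    · refine ⟨?_, isClosed_actH ha hb, ?_, ?_, ?_, ?_, ?_⟩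
      · rintro x ⟨y, hy, rfl⟩
        exact memlp_act _ hy.1
      · exact ⟨0, Hmn_zero_mem 0, act_zero_right φ⟩
      · rintro x ⟨y, hy, rfl⟩ x' ⟨y', hy', rfl⟩
        exact ⟨y + y', Hmn_add hy hy', act_add_right φ y y'⟩
      · rintro c x ⟨y, hy, rfl⟩
        exact ⟨c • y, Hmn_smul c hy, act_smul_right φ c y⟩
      · rintro x ⟨y, hy, rfl⟩
        exact ⟨fun i => y (i + 1), Hmn_shift hy, act_shift φ y⟩
      · rintro ψ hψ x ⟨y, hy, rfl⟩
        exact ⟨fun i => ψ (y i), Hmn_comp ψ hy,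
          act_comm_op φ ψ (fun k => (VonNeumannAlgebra.mem_commutant_iff.1 hψ _ (hm k)).symm) y⟩
    · set F := insert (0:ℤ) φ.coeff.support with hF
      have hFne : F.Nonempty := ⟨0, Finset.mem_insert_self _ _⟩
      refine ⟨F.min' hFne, F.max' hFne, ?_, ?_, ?_⟩
      · exact (Finset.min'_le F 0 (Finset.mem_insert_self _ _)).trans
          (Finset.le_max' F 0 (Finset.mem_insert_self _ _))
      · intro x hx
        have hy : act (lstar φ) x ∈ Hmn H 0 := by
          have hsupp : ∀ k ∈ (lstar φ).coeff.support, k ≤ -(F.min' hFne) := by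
            intro k hk
            rw [mem_support_lstar] at hk
            have h := Finset.min'_le F (-k) (Finset.mem_insert_of_mem hk)
            omega
          have h := act_mem_Hmn hsupp hx
          have h2 : F.min' hFne + -(F.min' hFne) = 0 := by omega
          rwa [h2] at h
        exact ⟨act (lstar φ) x, hy, act_inv_cancel hb x⟩
      · rintro x ⟨y, hy, rfl⟩
        have hsupp : ∀ k ∈ φ.coeff.support, k ≤ F.max' hFne := fun k hk =>
          Finset.le_max' F k (Finset.mem_insert_of_mem hk)
        have h := act_mem_Hmn hsupp hy
        have h2 : (0:ℤ) + F.max' hFne = F.max' hFne := by omega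
        rwa [h2] at h
  · -- InjOn
    intro φ h1 φ' h2 heq
    have hs1 : InPPUplus A (lstar φ * φ') := (actH_subset_iff h1 h2).1 (le_of_eq heq)
    have hs2 : InPPUplus A (lstar φ' * φ) := (actH_subset_iff h2 h1).1 (le_of_eq heq.symm)
    have h3 : ∀ i : ℤ, i ≠ 0 → (lstar φ * φ').coeff i = 0 := by
      intro i hi
      rcases lt_or_gt_of_ne hi with h | h
      · exact hs1.2 i h
      · have heq2 : lstar φ * φ' = lstar (lstar φ' * φ) := by rw [lstar_mul, lstar_lstar]
        rw [heq2, lstar_apply, hs2.2 (-i) (by omega), star_zero]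
    have h4 : lstar φ * φ' = AddMonoidAlgebra.single 0 ((lstar φ * φ').coeff 0) :=
      AddMonoidAlgebra.coeff_injective (Finsupp.ext fun i => by
        by_cases hi : i = 0
        · subst hi
          rw [AddMonoidAlgebra.coeff_single, Finsupp.single_eq_same]
        · rw [h3 i hi, AddMonoidAlgebra.coeff_single, Finsupp.single_eq_of_ne' (Ne.symm hi)])
    have h5 : (lstar φ * φ').coeff 0 = 1 := by
      have h6 : eps1 (lstar φ * φ') = 1 := hs1.1.2.2.2
      rw [h4, eps1_single] at h6
      exact h6
    have h7 : lstar φ * φ' = 1 := by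
      rw [h4, h5]
      rfl
    calc φ = φ * 1 := (mul_one φ).symm
      _ = φ * (lstar φ * φ') := by rw [h7]
      _ = (φ * lstar φ) * φ' := by rw [mul_assoc]
      _ = 1 * φ' := by rw [h1.2.2.1]
      _ = φ' := one_mul φ'
  · -- SurjOn
    intro S hS
    obtain ⟨hinv, m, n, hmn, hsub1, hsub2⟩ := hS
    obtain ⟨φ, hφ, heq⟩ := surj_aux A (n - m).toNat m n (by omega) S hinv hsub1 hsub2
    exact ⟨φ, hφ, heq⟩
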